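/- There exist universal constants c, C, K₀ > 0 (independent of B and δ) such that for every K ≥ K₀, every B ≥ 1, and every δ = (δ_1,…,δ_B) with each |δ_t| ≤ 1/4 and KL(P_δ ‖ P_0) ≥ C·K, the likelihood-ratio test φ_K(y) := 1{ L(y) ≥ K/2 } satisfies P_0(φ_K = 1) + P_δ(φ_K = 0) ≤ e^{−cK}. -/

import Mathlib

/-!
Both error probabilities are Chernoff bounds for `L = llr`, whose exponential moments under `P_δ`
factor over the coordinates: `E_δ[exp (s L)] = ∏ t, ((1 + 2δ_t)^(s+1) + (1 - 2δ_t)^(s+1)) / 2`.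
Since `P_0 = exp (-L) · P_δ`, the type I error is at most `exp (-K/2)`. For `s = -1/2` the moment
is the Bhattacharyya coefficient, at most `exp (-‖δ‖²/2)`, so the type II error is at most
`exp (K/4 - ‖δ‖²/2)`. For `s = 1` it is the χ²-moment `∏ t, (1 + 4δ_t²)`, and Jensen gives
`KL ≤ log E_δ[exp L] ≤ 4‖δ‖²`. Hence `KL ≥ 6K` makes the type II error at most `exp (-K/2)` as
well, and `2 exp (-K/2) ≤ exp (-K/4)` once `K ≥ 4`.
-/

open Real

/-- Probability mass of a Bernoulli(p) outcome. -/
def bernPMF (p : ℝ) : Bool → ℝ := fun b => if b then p else 1 - p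

/-- Probability mass function of the product measure `P_δ` on `{0,1}^B` whose `t`-th
coordinate is `Bernoulli(1/2 + δ t)`. -/
noncomputable def prodPMF (B : ℕ) (δ : Fin B → ℝ) (y : Fin B → Bool) : ℝ :=
  ∏ t, bernPMF (1/2 + δ t) (y t)

/-- KL budget `K(δ) = KL(P_δ ‖ P_0)` where `P_0` is the uniform measure on `{0,1}^B`. -/
noncomputable def klProd (B : ℕ) (δ : Fin B → ℝ) : ℝ :=
  ∑ y : Fin B → Bool,
    prodPMF B δ y * Real.log (prodPMF B δ y / prodPMF B (fun _ => 0) y)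

/-- Probability of an event `E ⊆ {0,1}^B` under the product measure `P_δ`. -/
noncomputable def probEvent (B : ℕ) (δ : Fin B → ℝ) (E : Set (Fin B → Bool)) : ℝ :=
  ∑ y : Fin B → Bool, E.indicator (prodPMF B δ) y

/-- Log-likelihood ratio of `P_δ` against `P_0` at outcome `y ∈ {0,1}^B`:
`L(y) = Σ_t [ y_t·log(2(1/2+δ_t)) + (1−y_t)·log(2(1/2−δ_t)) ]`. -/
noncomputable def llr (B : ℕ) (δ : Fin B → ℝ) (y : Fin B → Bool) : ℝ :=
  ∑ t, (if y t then Real.log (2 * (1/2 + δ t)) else Real.log (2 * (1/2 - δ t)))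

theorem sum_indicator_le_exp_mul_sum_mul_exp {α : Type*} [Fintype α] {w X : α → ℝ}
    {E : Set α} {a s : ℝ} (hw : ∀ y, 0 ≤ w y) (hs : 0 ≤ s) (hE : ∀ y ∈ E, a ≤ X y) :
    ∑ y, E.indicator w y ≤ exp (-(s * a)) * ∑ y, w y * exp (s * X y) := by
  rw [Finset.mul_sum]
  refine Finset.sum_le_sum fun y _ => ?_
  by_cases hy : y ∈ E
  · have hexp : 1 ≤ exp (-(s * a)) * exp (s * X y) := by
      rw [← exp_add]
      exact one_le_exp (by nlinarith [hE y hy])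
    rw [Set.indicator_of_mem hy]
    nlinarith [hw y]
  · rw [Set.indicator_of_notMem hy]
    exact mul_nonneg (exp_pos _).le (mul_nonneg (hw y) (exp_pos _).le)

theorem sqrt_one_add_add_sqrt_one_sub_le_exp {d : ℝ} (hd : |d| ≤ 1/2) :
    (√(1 + 2 * d) + √(1 - 2 * d)) / 2 ≤ exp (-d ^ 2 / 2) := by
  obtain ⟨hd₁, hd₂⟩ := abs_le.mp hd
  have hp : 0 ≤ 1 + 2 * d := by linarith
  have hm : 0 ≤ 1 - 2 * d := by linarith
  have hd_sq : d ^ 2 ≤ 1/4 := by nlinarith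
  have hmul : √(1 + 2 * d) * √(1 - 2 * d) ≤ 1 - 2 * d ^ 2 := by
    rw [← sqrt_mul hp, sqrt_le_left (by linarith)]
    nlinarith
  have hsq : exp (-d ^ 2 / 2) ^ 2 = exp (-d ^ 2) := by
    rw [← exp_nat_mul]; ring_nf
  rw [← pow_le_pow_iff_left₀ (by positivity) (exp_pos _).le two_ne_zero, hsq]
  nlinarith [sq_sqrt hp, sq_sqrt hm, add_one_le_exp (-d ^ 2)]

noncomputable def llrTerm (d : ℝ) (b : Bool) : ℝ :=
  if b then log (2 * (1/2 + d)) else log (2 * (1/2 - d))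

theorem llr_eq_sum_llrTerm {B : ℕ} (δ : Fin B → ℝ) (y : Fin B → Bool) :
    llr B δ y = ∑ t, llrTerm (δ t) (y t) := rfl

theorem bernPMF_half_add_pos {d : ℝ} (hd : |d| < 1/2) (b : Bool) : 0 < bernPMF (1/2 + d) b := by
  obtain ⟨hd₁, hd₂⟩ := abs_lt.mp hd
  cases b <;> simp only [bernPMF] <;> norm_num <;> linarith

theorem exp_llrTerm {d : ℝ} (hd : |d| < 1/2) (b : Bool) :
    exp (llrTerm d b) = 2 * bernPMF (1/2 + d) b := by
  obtain ⟨hd₁, hd₂⟩ := abs_lt.mp hd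
  cases b
  · simp only [llrTerm, bernPMF, Bool.false_eq_true, if_false]
    rw [exp_log (by linarith)]
    ring
  · simp only [llrTerm, bernPMF, if_true]
    rw [exp_log (by linarith)]

theorem sum_bernPMF_mul_exp_mul_llrTerm {d : ℝ} (hd : |d| < 1/2) (s : ℝ) :
    ∑ b, bernPMF (1/2 + d) b * exp (s * llrTerm d b)
      = ((1 + 2 * d) ^ (s + 1) + (1 - 2 * d) ^ (s + 1)) / 2 := by
  have hterm : ∀ b, bernPMF (1/2 + d) b * exp (s * llrTerm d b)
      = (2 * bernPMF (1/2 + d) b) ^ (s + 1) / 2 := fun b => by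
    rw [mul_comm s, exp_mul, exp_llrTerm hd,
      rpow_add_one (by linarith [bernPMF_half_add_pos hd b])]
    ring
  rw [Fintype.sum_bool, hterm, hterm]
  simp only [bernPMF, Bool.false_eq_true, if_false, if_true]
  ring_nf

section

variable {B : ℕ} {δ : Fin B → ℝ}

theorem sum_prodPMF : ∑ y, prodPMF B δ y = 1 := by
  unfold prodPMF
  rw [← Fintype.prod_sum (fun t b => bernPMF (1/2 + δ t) b)]
  simp [bernPMF]

theorem prodPMF_pos (hδ : ∀ t, |δ t| < 1/2) (y : Fin B → Bool) :
    0 < prodPMF B δ y :=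
  Finset.prod_pos fun t _ => bernPMF_half_add_pos (hδ t) (y t)

theorem prodPMF_eq_exp_llr_mul (hδ : ∀ t, |δ t| < 1/2)
    (y : Fin B → Bool) : prodPMF B δ y = exp (llr B δ y) * prodPMF B (fun _ => 0) y := by
  have hhalf : ∀ b, bernPMF (1/2 + 0) b = 1/2 := fun b => by cases b <;> norm_num [bernPMF]
  simp only [prodPMF, llr_eq_sum_llrTerm, exp_sum, exp_llrTerm (hδ _), hhalf,
    ← Finset.prod_mul_distrib]
  exact Finset.prod_congr rfl fun t _ => by ring

theorem sum_prodPMF_mul_exp_mul_llr (hδ : ∀ t, |δ t| < 1/2) (s : ℝ) :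
    ∑ y, prodPMF B δ y * exp (s * llr B δ y)
      = ∏ t, ((1 + 2 * δ t) ^ (s + 1) + (1 - 2 * δ t) ^ (s + 1)) / 2 := by
  simp only [← sum_bernPMF_mul_exp_mul_llrTerm (hδ _), Fintype.prod_sum, prodPMF,
    llr_eq_sum_llrTerm, Finset.mul_sum, exp_sum, ← Finset.prod_mul_distrib]

theorem klProd_le_four_mul_sum_sq (hδ : ∀ t, |δ t| < 1/2) :
    klProd B δ ≤ 4 * ∑ t, δ t ^ 2 := by
  have hlog : ∀ y, log (prodPMF B δ y / prodPMF B (fun _ => 0) y) = llr B δ y := fun y => by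
    rw [prodPMF_eq_exp_llr_mul hδ y,
      mul_div_cancel_right₀ _ (prodPMF_pos (fun _ => by norm_num) y).ne', log_exp]
  have hjensen : exp (∑ y, prodPMF B δ y * llr B δ y) ≤ ∑ y, prodPMF B δ y * exp (llr B δ y) :=
    convexOn_exp.map_sum_le (fun y _ => (prodPMF_pos hδ y).le) sum_prodPMF
      (fun y _ => Set.mem_univ _)
  have hchi : ∑ y, prodPMF B δ y * exp (llr B δ y) = ∏ t, (1 + 4 * δ t ^ 2) := by
    have h := sum_prodPMF_mul_exp_mul_llr hδ 1
    simp only [one_mul, one_add_one_eq_two, rpow_two] at h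
    rw [h]
    exact Finset.prod_congr rfl fun t _ => by ring
  have hprod : ∏ t, (1 + 4 * δ t ^ 2) ≤ exp (4 * ∑ t, δ t ^ 2) := by
    rw [Finset.mul_sum, exp_sum]
    exact Finset.prod_le_prod (fun t _ => by positivity)
      fun t _ => by linarith [add_one_le_exp (4 * δ t ^ 2)]
  rw [← exp_le_exp, klProd]
  simp only [hlog]
  exact hjensen.trans (hchi.trans_le hprod)

theorem probEvent_zero_le_llr_le (hδ : ∀ t, |δ t| < 1/2) (a : ℝ) :
    probEvent B (fun _ => 0) {y | a ≤ llr B δ y} ≤ exp (-a) := by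
  have h := sum_indicator_le_exp_mul_sum_mul_exp (w := prodPMF B fun _ => 0)
    (X := llr B δ) (E := {y | a ≤ llr B δ y}) (a := a)
    (fun y => (prodPMF_pos (fun _ => by norm_num) y).le) zero_le_one fun _ hy => hy
  simpa [probEvent, mul_comm, ← prodPMF_eq_exp_llr_mul hδ, sum_prodPMF] using h

theorem probEvent_llr_lt_le (hδ : ∀ t, |δ t| < 1/2) (a : ℝ) :
    probEvent B δ {y | llr B δ y < a} ≤ exp (a / 2 - (∑ t, δ t ^ 2) / 2) := by
  have h := sum_indicator_le_exp_mul_sum_mul_exp (w := prodPMF B δ)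
    (X := fun y => -llr B δ y) (E := {y | llr B δ y < a}) (a := -a) (s := 1/2)
    (fun y => (prodPMF_pos hδ y).le) (by norm_num) fun _ hy => neg_le_neg (le_of_lt hy)
  have hbhatt : ∑ y, prodPMF B δ y * exp (-(1/2) * llr B δ y) ≤ exp (-(∑ t, δ t ^ 2) / 2) := by
    have hhalf : -(1/2 : ℝ) + 1 = 1/2 := by norm_num
    simp only [sum_prodPMF_mul_exp_mul_llr hδ, hhalf, ← sqrt_eq_rpow, ← Finset.sum_neg_distrib,
      Finset.sum_div, exp_sum]
    exact Finset.prod_le_prod (fun t _ => by positivity)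
      fun t _ => sqrt_one_add_add_sqrt_one_sub_le_exp (hδ t).le
  simp only [← neg_mul_comm] at h
  calc probEvent B δ {y | llr B δ y < a}
      ≤ exp (-(-(1/2) * a)) * exp (-(∑ t, δ t ^ 2) / 2) :=
        h.trans (mul_le_mul_of_nonneg_left hbhatt (exp_pos _).le)
    _ = exp (a / 2 - (∑ t, δ t ^ 2) / 2) := by rw [← exp_add]; ring_nf

end

/-- **Matching upper bound via the likelihood-ratio test.** There exist universal constants
`c, C, K₀ > 0` (independent of `B` and `δ`) such that for every `K ≥ K₀`, every `B ≥ 1`, and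
every `δ` with `|δ_t| ≤ 1/4` and `KL(P_δ ‖ P_0) ≥ C·K`, the likelihood-ratio test
`φ_K(y) = 1{L(y) ≥ K/2}` satisfies `P_0(φ_K = 1) + P_δ(φ_K = 0) ≤ e^{−cK}`. -/
theorem lr_test_upper_bound :
    ∃ c > (0 : ℝ), ∃ C > (0 : ℝ), ∃ K₀ > (0 : ℝ), ∀ K : ℝ, K₀ ≤ K →
      ∀ (B : ℕ), 1 ≤ B → ∀ δ : Fin B → ℝ, (∀ t, |δ t| ≤ 1/4) →
      C * K ≤ klProd B δ →
      probEvent B (fun _ => 0) {y | K/2 ≤ llr B δ y} +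
        probEvent B δ {y | llr B δ y < K/2} ≤ Real.exp (-(c * K)) := by
  refine ⟨1/4, by norm_num, 6, by norm_num, 4, by norm_num, fun K hK B _ δ hδ hkl => ?_⟩
  have hδ' : ∀ t, |δ t| < 1/2 := fun t => (hδ t).trans_lt (by norm_num)
  have htypeII : probEvent B δ {y | llr B δ y < K/2} ≤ exp (-(K/2)) :=
    (probEvent_llr_lt_le hδ' _).trans <| exp_le_exp.mpr <| by
      linarith [klProd_le_four_mul_sum_sq hδ']
  have htwo : 2 ≤ exp (K/4) := by linarith [add_one_le_exp (K/4)]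
  calc _ ≤ 2 * exp (-(K/2)) := by linarith [probEvent_zero_le_llr_le hδ' (K/2)]
    _ ≤ exp (K/4) * exp (-(K/2)) := by gcongr
    _ = exp (-(1/4 * K)) := by rw [← exp_add]; ring_nf
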